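/- arXiv:1802.01541 — 2 statements merged into one kernel-verified Lean document; each statement's English description precedes it below -/
import Mathlib

section
/- Let N, N_r, p, q be natural numbers with p + q ≤ N_r ≤ N. The number of (p+q)-tuples k with k_1,...,k_p ∈ {1,...,N}, k_{p+1},...,k_{p+q} ∈ {1,...,N_r}, and all entries pairwise distinct, equals (∏_{i=0}^{q-1} (N_r − i)) · (∏_{j=q}^{p+q-1} (N − j)). -/
/-!
Choose the last `q` entries first, as an injection into `{1, …, N_r}`. Since `N_r ≤ N`, whatever
they are, they use up exactly `q` elements of `{1, …, N}`, so the first `p` entries are an injection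
into a set of `N - q` elements, independently of the earlier choice.
-/

open Finset Function

section

variable {α ι κ : Type*} [DecidableEq α] [Fintype κ] {s t : Finset α}

def sumElimEmbeddingEquiv :
    {f : ι ⊕ κ → α // (∀ i, f (.inl i) ∈ t) ∧ (∀ j, f (.inr j) ∈ s) ∧ Injective f} ≃
      Σ g : κ ↪ s, ι ↪ ↥(t \ univ.map (g.trans (Embedding.subtype _))) where
  toFun f :=
    ⟨⟨fun j => ⟨f.1 (.inr j), f.2.2.1 j⟩, fun _ _ h => Sum.inr_injective (f.2.2.2 congr($h.1))⟩,
      ⟨fun i => ⟨f.1 (.inl i), mem_sdiff.2 ⟨f.2.1 i,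
          fun h => (mem_map.1 h).elim fun _ hj => Sum.inr_ne_inl (f.2.2.2 hj.2)⟩⟩,
        fun _ _ h => Sum.inl_injective (f.2.2.2 congr($h.1))⟩⟩
  invFun gh := ⟨Sum.elim (fun i => gh.2 i) (fun j => gh.1 j), fun i => (mem_sdiff.1 (gh.2 i).2).1,
    fun j => (gh.1 j).2,
    (Subtype.val_injective.comp gh.2.injective).sumElim (Subtype.val_injective.comp gh.1.injective)
      fun i j h => (mem_sdiff.1 (gh.2 i).2).2 (mem_map.2 ⟨j, mem_univ j, h.symm⟩)⟩
  left_inv _ := Subtype.ext <| funext <| Sum.rec (fun _ => rfl) (fun _ => rfl)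
  right_inv _ := rfl

variable [Fintype ι]

theorem card_sdiff_map_univ (hst : s ⊆ t) (g : κ ↪ s) :
    #(t \ univ.map (g.trans (Embedding.subtype _))) = #t - Fintype.card κ := by
  rw [card_sdiff_of_subset fun _ hx => ?_, card_map, card_univ]
  obtain ⟨j, -, rfl⟩ := mem_map.1 hx
  exact hst (g j).2

theorem card_injective_sum_of_subset (hst : s ⊆ t) :
    Nat.card {f : ι ⊕ κ → α // (∀ i, f (.inl i) ∈ t) ∧ (∀ j, f (.inr j) ∈ s) ∧ Injective f} =
      (#s).descFactorial (Fintype.card κ) * (#t - Fintype.card κ).descFactorial (Fintype.card ι) := by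
  classical
  rw [Nat.card_congr sumElimEmbeddingEquiv, Nat.card_eq_fintype_card, Fintype.card_sigma]
  simp only [Fintype.card_embedding_eq, Fintype.card_coe, card_sdiff_map_univ hst, sum_const,
    card_univ, smul_eq_mul]

end

theorem distinct_tuple_count_general (N Nr p q : ℕ) (hNr : Nr ≤ N) :
    Nat.card {k : Fin (p + q) → ℕ //
      (∀ i : Fin (p + q), (i : ℕ) < p → k i ∈ Finset.Icc 1 N) ∧
      (∀ i : Fin (p + q), p ≤ (i : ℕ) → k i ∈ Finset.Icc 1 Nr) ∧
      Function.Injective k} =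
    (∏ i ∈ Finset.range q, (Nr - i)) * ∏ j ∈ Finset.Ico q (p + q), (N - j) := by
  calc
    _ = Nat.card {f : Fin p ⊕ Fin q → ℕ //
          (∀ i, f (.inl i) ∈ Icc 1 N) ∧ (∀ j, f (.inr j) ∈ Icc 1 Nr) ∧ Injective f} :=
      Nat.card_congr <| (finSumFinEquiv.arrowCongr (Equiv.refl ℕ)).symm.subtypeEquiv fun k => by
        simp [Fin.forall_fin_add, Equiv.arrowCongr]
    _ = Nr.descFactorial q * (N - q).descFactorial p := by
      rw [card_injective_sum_of_subset (Icc_subset_Icc_right hNr)]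
      simp only [Nat.card_Icc, add_tsub_cancel_right, Fintype.card_fin]
    _ = _ := by
      simp only [Nat.descFactorial_eq_prod_range, prod_Ico_eq_prod_range, add_tsub_cancel_right,
        Nat.sub_sub]

/-- The number of (p+q)-tuples `k` with the first `p` entries in `{1,...,N}`,
the last `q` entries in `{1,...,N_r}`, and all entries pairwise distinct, equals
`(∏_{i=0}^{q-1} (N_r − i)) · (∏_{j=q}^{p+q-1} (N − j))`. -/
theorem distinct_tuple_count (N Nr p q : ℕ) (hpq : p + q ≤ Nr) (hNr : Nr ≤ N) :
    Nat.card {k : Fin (p + q) → ℕ //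
      (∀ i : Fin (p + q), (i : ℕ) < p → k i ∈ Finset.Icc 1 N) ∧
      (∀ i : Fin (p + q), p ≤ (i : ℕ) → k i ∈ Finset.Icc 1 Nr) ∧
      Function.Injective k} =
    (∏ i ∈ Finset.range q, (Nr - i)) * ∏ j ∈ Finset.Ico q (p + q), (N - j) :=
  distinct_tuple_count_general N Nr p q hNr
end

section
/- Let C and Ĉ be m × m real symmetric matrices with eigenvalues listed in decreasing order, and let A, Â ∈ R^{m×n} contain orthonormal eigenvectors for the top n eigenvalues of C and Ĉ respectively. Suppose the spectral gap δ = λ_n(C) − λ_{n+1}(C) > 0 and ‖C − Ĉ‖_2 ≤ δ/5. Then dist(A, Â) = ‖AAᵀ − ÂÂᵀ‖_2 ≤ (4/δ) ‖Bᵀ (C − Ĉ) A‖_2, where B ∈ R^{m×(m−n)} contains the remaining orthonormal eigenvectors of C. -/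
open Matrix
open scoped Matrix.Norms.L2Operator

/-!
Write `P`, `P̂` for the orthogonal projections onto the top-`n` eigenspaces of `C`, `Ĉ`, and
`ε = ‖C - Ĉ‖`. By Weyl's inequality the eigenvalues move by at most `ε`, so the top-`n`
eigenvalues of `Ĉ` stay `δ - ε` above the bottom eigenvalues of `C`, and vice versa. Then
`X = Bᵀ Â` solves a Sylvester equation `X Λ̂₁ - Λ₂ X = Bᵀ (Ĉ - C) Â` whose two spectra are
separated by `δ - ε`, which forces `(δ - ε) ‖X‖ ≤ ‖Bᵀ (Ĉ - C) Â‖`; the same holds with the roles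
of `C` and `Ĉ` exchanged. Both right-hand sides are at most `‖Bᵀ (C - Ĉ) A‖ + ε ‖P - P̂‖`, while
`‖P - P̂‖` is at most the larger of the two `‖X‖`. Hence `(δ - 2ε) ‖P - P̂‖ ≤ ‖Bᵀ (C - Ĉ) A‖`, and
`ε ≤ δ / 5` gives the claim (even with `5 / 3` in place of `4`).
-/

namespace Matrix

variable {ι l m n : Type*} [Fintype ι] [Fintype l] [Fintype m] [Fintype n]

lemma sq_norm_toLp (x : n → ℝ) : ‖WithLp.toLp 2 x‖ ^ 2 = x ⬝ᵥ x := by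
  rw [EuclideanSpace.real_norm_sq_eq]
  simp [dotProduct, sq]

lemma mulVec_dotProduct_mulVec_le [DecidableEq n] (M : Matrix m n ℝ) (x : n → ℝ) :
    (M *ᵥ x) ⬝ᵥ (M *ᵥ x) ≤ ‖M‖ ^ 2 * (x ⬝ᵥ x) := by
  rw [← sq_norm_toLp, ← sq_norm_toLp, ← mul_pow]
  exact pow_le_pow_left₀ (norm_nonneg _) (M.l2_opNorm_mulVec (WithLp.toLp 2 x)) 2

lemma l2_opNorm_le_of_mulVec_dotProduct_mulVec_le [DecidableEq n] (M : Matrix m n ℝ) {c : ℝ}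
    (hc : 0 ≤ c) (h : ∀ x, (M *ᵥ x) ⬝ᵥ (M *ᵥ x) ≤ c ^ 2 * (x ⬝ᵥ x)) : ‖M‖ ≤ c := by
  rw [l2_opNorm_def]
  refine ContinuousLinearMap.opNorm_le_bound _ hc fun x => ?_
  refine pow_le_pow_iff_left₀ (norm_nonneg _) (by positivity) two_ne_zero |>.1 ?_
  change ‖WithLp.toLp 2 (M *ᵥ x.ofLp)‖ ^ 2 ≤ _
  simpa [mul_pow, ← sq_norm_toLp] using h x.ofLp

lemma dotProduct_mulVec_le [DecidableEq n] (M : Matrix n n ℝ) (x : n → ℝ) :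
    x ⬝ᵥ M *ᵥ x ≤ ‖M‖ * (x ⬝ᵥ x) := by
  calc x ⬝ᵥ M *ᵥ x = inner ℝ (WithLp.toLp 2 x) (WithLp.toLp 2 (M *ᵥ x)) := by
        simp [EuclideanSpace.inner_eq_star_dotProduct, dotProduct_comm]
    _ ≤ ‖WithLp.toLp 2 x‖ * (‖M‖ * ‖WithLp.toLp 2 x‖) :=
        (real_inner_le_norm _ _).trans
          (mul_le_mul_of_nonneg_left (M.l2_opNorm_mulVec (WithLp.toLp 2 x)) (norm_nonneg _))
    _ = ‖M‖ * (x ⬝ᵥ x) := by rw [← sq_norm_toLp]; ring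

lemma l2_opNorm_transpose [DecidableEq m] [DecidableEq n] (M : Matrix m n ℝ) : ‖Mᵀ‖ = ‖M‖ := by
  rw [← conjTranspose_eq_transpose_of_trivial, l2_opNorm_conjTranspose]

lemma l2_opNorm_transpose_mul_self [DecidableEq n] (M : Matrix m n ℝ) :
    ‖Mᵀ * M‖ = ‖M‖ * ‖M‖ := by
  rw [← conjTranspose_eq_transpose_of_trivial, l2_opNorm_conjTranspose_mul_self]

lemma l2_opNorm_mul_of_transpose_mul_self_eq_one [DecidableEq m] [DecidableEq n]
    {U : Matrix l m ℝ} (hU : Uᵀ * U = 1) (M : Matrix m n ℝ) : ‖U * M‖ = ‖M‖ := by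
  have h : ‖U * M‖ * ‖U * M‖ = ‖M‖ * ‖M‖ := by
    rw [← l2_opNorm_transpose_mul_self, transpose_mul, Matrix.mul_assoc, ← Matrix.mul_assoc Uᵀ,
      hU, Matrix.one_mul, l2_opNorm_transpose_mul_self]
  nlinarith [norm_nonneg (U * M), norm_nonneg M]

lemma l2_opNorm_mul_transpose_of_transpose_mul_self_eq_one [DecidableEq l] [DecidableEq m]
    [DecidableEq n] {U : Matrix l m ℝ} (hU : Uᵀ * U = 1) (M : Matrix n m ℝ) :
    ‖M * Uᵀ‖ = ‖M‖ := by
  rw [← l2_opNorm_transpose, transpose_mul, transpose_transpose,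
    l2_opNorm_mul_of_transpose_mul_self_eq_one hU, l2_opNorm_transpose]

lemma mul_dotProduct_self_le_dotProduct_diagonal_mulVec [DecidableEq n] {d : n → ℝ} {s : ℝ}
    {x : n → ℝ} (h : ∀ i, x i ≠ 0 → s ≤ d i) : s * (x ⬝ᵥ x) ≤ x ⬝ᵥ diagonal d *ᵥ x := by
  simp only [dotProduct, mulVec_diagonal, Finset.mul_sum]
  refine Finset.sum_le_sum fun i _ => ?_
  by_cases hx : x i = 0
  · simp [hx]
  · nlinarith [h i hx, mul_self_nonneg (x i)]

lemma dotProduct_diagonal_mulVec_le_mul_dotProduct_self [DecidableEq n] {d : n → ℝ} {s : ℝ}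
    {x : n → ℝ} (h : ∀ i, x i ≠ 0 → d i ≤ s) : x ⬝ᵥ diagonal d *ᵥ x ≤ s * (x ⬝ᵥ x) := by
  simp only [dotProduct, mulVec_diagonal, Finset.mul_sum]
  refine Finset.sum_le_sum fun i _ => ?_
  by_cases hx : x i = 0
  · simp [hx]
  · nlinarith [h i hx, mul_self_nonneg (x i)]

lemma dotProduct_mulVec_eigendecomp [DecidableEq ι] (W : Matrix ι ι ℝ) (lam : ι → ℝ)
    (x : ι → ℝ) :
    x ⬝ᵥ (W * diagonal lam * Wᵀ) *ᵥ x = (Wᵀ *ᵥ x) ⬝ᵥ diagonal lam *ᵥ (Wᵀ *ᵥ x) := by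
  rw [← mulVec_mulVec, ← mulVec_mulVec, dotProduct_mulVec, ← mulVec_transpose]

lemma transpose_mulVec_dotProduct_self [DecidableEq ι] {W : Matrix ι ι ℝ} (hW : Wᵀ * W = 1)
    (x : ι → ℝ) : (Wᵀ *ᵥ x) ⬝ᵥ (Wᵀ *ᵥ x) = x ⬝ᵥ x := by
  rw [← dotProduct_transpose_mulVec, transpose_transpose, mulVec_mulVec,
    mul_eq_one_comm.mp hW, one_mulVec]

lemma exists_ne_zero_transpose_mul_self_mulVec_eq [DecidableEq n] [Nonempty n]
    (X : Matrix m n ℝ) : ∃ v ≠ 0, (Xᵀ * X) *ᵥ v = ‖X‖ ^ 2 • v := by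
  have hS : (Xᵀ * X).IsHermitian := by
    simpa [conjTranspose_eq_transpose_of_trivial] using isHermitian_conjTranspose_mul_self X
  obtain ⟨j, -, hj⟩ := Finset.univ.exists_max_image hS.eigenvalues Finset.univ_nonempty
  set v := ⇑(hS.eigenvectorBasis j)
  have hv : v ⬝ᵥ v = 1 := by
    rw [← sq_norm_toLp]
    simp [v, hS.eigenvectorBasis.orthonormal.1 j]
  have hU : (hS.eigenvectorUnitary : Matrix n n ℝ)ᵀ * hS.eigenvectorUnitary = 1 := by
    simpa [star_eq_conjTranspose] using Matrix.UnitaryGroup.star_mul_self hS.eigenvectorUnitary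
  have h_le : ‖X‖ ^ 2 ≤ hS.eigenvalues j := by
    have hnonneg : ∀ i, 0 ≤ hS.eigenvalues i := by
      simpa [conjTranspose_eq_transpose_of_trivial] using
        (posSemidef_conjTranspose_mul_self X).eigenvalues_nonneg
    have hdiag : ‖Xᵀ * X‖ = ‖diagonal (RCLike.ofReal ∘ hS.eigenvalues : n → ℝ)‖ := by
      conv_lhs => rw [hS.spectral_theorem]
      rw [Unitary.conjStarAlgAut_apply, star_eq_conjTranspose,
        conjTranspose_eq_transpose_of_trivial,
        l2_opNorm_mul_transpose_of_transpose_mul_self_eq_one hU,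
        l2_opNorm_mul_of_transpose_mul_self_eq_one hU]
    rw [sq, ← l2_opNorm_transpose_mul_self, hdiag, l2_opNorm_diagonal,
      pi_norm_le_iff_of_nonneg (hnonneg j)]
    intro i
    simpa [abs_of_nonneg (hnonneg i)] using hj i (Finset.mem_univ i)
  have h_ge : hS.eigenvalues j ≤ ‖X‖ ^ 2 := by
    have := dotProduct_mulVec_le (Xᵀ * X) v
    rwa [hS.mulVec_eigenvectorBasis, dotProduct_smul, hv, smul_eq_mul, mul_one, mul_one,
      l2_opNorm_transpose_mul_self, ← sq] at this
  refine ⟨v, fun h => by simp [h] at hv, ?_⟩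
  rw [hS.mulVec_eigenvectorBasis, le_antisymm h_le h_ge]

theorem mul_l2_opNorm_le_l2_opNorm_mul_diagonal_sub_diagonal_mul [DecidableEq m]
    [DecidableEq n] (X : Matrix m n ℝ) {d : n → ℝ} {e : m → ℝ} {s γ : ℝ}
    (hd : ∀ j, s + γ ≤ d j) (he : ∀ i, e i ≤ s) :
    γ * ‖X‖ ≤ ‖X * diagonal d - diagonal e * X‖ := by
  set M := X * diagonal d - diagonal e * X
  rcases (norm_nonneg X).eq_or_lt with hX | hX
  · rw [← hX, mul_zero]
    exact norm_nonneg M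
  have : Nonempty n := by
    by_contra h
    rw [not_nonempty_iff] at h
    simp [Subsingleton.elim X 0] at hX
  -- Test `Xᵀ M` against a top right singular vector `v` of `X`.
  obtain ⟨v, hv0, hv⟩ := exists_ne_zero_transpose_mul_self_mulVec_eq X
  have hvv : 0 < v ⬝ᵥ v := by simpa using dotProduct_self_star_pos_iff.2 hv0
  have hXv : (X *ᵥ v) ⬝ᵥ (X *ᵥ v) = ‖X‖ ^ 2 * (v ⬝ᵥ v) := by
    rw [← dotProduct_transpose_mulVec, mulVec_mulVec, hv, dotProduct_smul, smul_eq_mul]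
  have hform : v ⬝ᵥ (Xᵀ * M) *ᵥ v =
      ‖X‖ ^ 2 * (v ⬝ᵥ diagonal d *ᵥ v) - (X *ᵥ v) ⬝ᵥ diagonal e *ᵥ (X *ᵥ v) := by
    have hsymm : (Xᵀ * X)ᵀ = Xᵀ * X := by rw [transpose_mul, transpose_transpose]
    rw [Matrix.mul_sub, sub_mulVec, dotProduct_sub, ← Matrix.mul_assoc, ← mulVec_mulVec,
      dotProduct_mulVec, ← mulVec_transpose, hsymm, hv, smul_dotProduct, smul_eq_mul,
      ← mulVec_mulVec, dotProduct_transpose_mulVec, ← mulVec_mulVec,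
      dotProduct_comm (diagonal e *ᵥ _)]
  have hlower : γ * ‖X‖ ^ 2 * (v ⬝ᵥ v) ≤ v ⬝ᵥ (Xᵀ * M) *ᵥ v := by
    have hd' := mul_dotProduct_self_le_dotProduct_diagonal_mulVec (x := v) fun j _ => hd j
    have he' := dotProduct_diagonal_mulVec_le_mul_dotProduct_self (x := X *ᵥ v) fun i _ => he i
    rw [hXv] at he'
    rw [hform]
    nlinarith
  have hupper : v ⬝ᵥ (Xᵀ * M) *ᵥ v ≤ ‖X‖ * ‖M‖ * (v ⬝ᵥ v) := by
    refine (dotProduct_mulVec_le _ v).trans (mul_le_mul_of_nonneg_right ?_ hvv.le)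
    exact (l2_opNorm_mul _ _).trans_eq (by rw [l2_opNorm_transpose])
  refine le_of_mul_le_mul_right (a := ‖X‖ * (v ⬝ᵥ v)) ?_ (by positivity)
  nlinarith

lemma exists_ne_zero_mulVec_eq_zero_of_lt_of_gt {K : Type*} [Field K] {m : ℕ}
    (M N : Matrix (Fin m) (Fin m) K) (k : Fin m) :
    ∃ x ≠ 0, (∀ i, k < i → (M *ᵥ x) i = 0) ∧ ∀ i, i < k → (N *ᵥ x) i = 0 := by
  let F : (Fin m → K) →ₗ[K] (Set.Ioi k → K) × (Set.Iio k → K) :=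
    ((LinearMap.funLeft K K Subtype.val).comp M.mulVecLin).prod
      ((LinearMap.funLeft K K Subtype.val).comp N.mulVecLin)
  have hdim : Module.finrank K ((Set.Ioi k → K) × (Set.Iio k → K)) <
      Module.finrank K (Fin m → K) := by
    simp only [Module.finrank_prod, Module.finrank_fintype_fun_eq_card, Fintype.card_Ioi,
      Fintype.card_Iio, Fin.card_Ioi, Fin.card_Iio, Fintype.card_fin]
    omega
  obtain ⟨x, hx, hx0⟩ :=
    Submodule.exists_mem_ne_zero_of_ne_bot (LinearMap.ker_ne_bot_of_finrank_lt hdim)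
  have hFx : F x = 0 := hx
  exact ⟨x, hx0, fun i hi => congrFun (congrArg Prod.fst hFx) ⟨i, hi⟩,
    fun i hi => congrFun (congrArg Prod.snd hFx) ⟨i, hi⟩⟩

theorem eigenvalue_sub_l2_opNorm_sub_le {m : ℕ} {C C' W W' : Matrix (Fin m) (Fin m) ℝ}
    {lam lam' : Fin m → ℝ} (hlam : Antitone lam) (hlam' : Antitone lam') (hW : Wᵀ * W = 1)
    (hW' : W'ᵀ * W' = 1) (hC : C = W * diagonal lam * Wᵀ) (hC' : C' = W' * diagonal lam' * W'ᵀ)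
    (k : Fin m) : lam k - ‖C - C'‖ ≤ lam' k := by
  -- `x` lies in the span of the top `k + 1` eigenvectors of `C` and of the bottom `m - k` of `C'`.
  obtain ⟨x, hx0, hxW, hxW'⟩ := exists_ne_zero_mulVec_eq_zero_of_lt_of_gt Wᵀ W'ᵀ k
  have hxx : 0 < x ⬝ᵥ x := by simpa using dotProduct_self_star_pos_iff.2 hx0
  have hC_ge : lam k * (x ⬝ᵥ x) ≤ x ⬝ᵥ C *ᵥ x := by
    rw [hC, dotProduct_mulVec_eigendecomp, ← transpose_mulVec_dotProduct_self hW x]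
    exact mul_dotProduct_self_le_dotProduct_diagonal_mulVec fun i hi =>
      hlam (not_lt.1 fun hki => hi (hxW i hki))
  have hC'_le : x ⬝ᵥ C' *ᵥ x ≤ lam' k * (x ⬝ᵥ x) := by
    rw [hC', dotProduct_mulVec_eigendecomp, ← transpose_mulVec_dotProduct_self hW' x]
    exact dotProduct_diagonal_mulVec_le_mul_dotProduct_self fun i hi =>
      hlam' (not_lt.1 fun hik => hi (hxW' i hik))
  have hpert := dotProduct_mulVec_le (C - C') x
  rw [sub_mulVec, dotProduct_sub] at hpert
  nlinarith

end Matrix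

lemma IsStarProjection.transpose_eq {n : Type*} [Fintype n] {P : Matrix n n ℝ}
    (hP : IsStarProjection P) : Pᵀ = P := by
  simpa [star_eq_conjTranspose] using hP.isSelfAdjoint.star_eq

lemma IsStarProjection.mulVec_dotProduct_one_sub_mulVec {n : Type*} [Fintype n] [DecidableEq n]
    {P : Matrix n n ℝ} (hP : IsStarProjection P) (x y : n → ℝ) :
    (P *ᵥ x) ⬝ᵥ ((1 - P) *ᵥ y) = 0 := by
  rw [dotProduct_mulVec, ← mulVec_transpose, transpose_sub, transpose_one, hP.transpose_eq,
    mulVec_mulVec, hP.one_sub_mul_self, zero_mulVec, zero_dotProduct]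

namespace Matrix

variable {ι k l n : Type*} [Fintype ι] [Fintype n]

theorem l2_opNorm_sub_le_max_of_isStarProjection [DecidableEq n] {P Q : Matrix n n ℝ}
    (hP : IsStarProjection P) (hQ : IsStarProjection Q) :
    ‖P - Q‖ ≤ max ‖(1 - Q) * P‖ ‖(1 - P) * Q‖ := by
  set c := max ‖(1 - Q) * P‖ ‖(1 - P) * Q‖
  have hbound : ∀ (M : Matrix n n ℝ) (w : n → ℝ), ‖M‖ ≤ c →
      (M *ᵥ w) ⬝ᵥ (M *ᵥ w) ≤ c ^ 2 * (w ⬝ᵥ w) := fun M w hM =>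
    (mulVec_dotProduct_mulVec_le M w).trans <| mul_le_mul_of_nonneg_right
      (pow_le_pow_left₀ (norm_nonneg _) hM 2) (by simpa using dotProduct_self_star_nonneg w)
  refine l2_opNorm_le_of_mulVec_dotProduct_mulVec_le _ (le_max_of_le_left (norm_nonneg _))
    fun x => ?_
  -- Pythagoras twice: `x` splits orthogonally along `Q`, and `(P - Q) x` along `P`.
  set y := Q *ᵥ x
  set z := (1 - Q) *ᵥ x
  have hsplit : (P - Q) *ᵥ x = (P * (1 - Q)) *ᵥ z - ((1 - P) * Q) *ᵥ y := by
    simp only [y, z, mulVec_mulVec, Matrix.mul_assoc, hQ.isIdempotentElem.eq,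
      hQ.one_sub.isIdempotentElem.eq, ← sub_mulVec]
    congr 1
    noncomm_ring
  have hu : ‖P * (1 - Q)‖ ≤ c := by
    rw [← hP.transpose_eq, ← hQ.one_sub.transpose_eq, ← transpose_mul, l2_opNorm_transpose]
    exact le_max_left _ _
  have hx : x ⬝ᵥ x = y ⬝ᵥ y + z ⬝ᵥ z := by
    have hyz : y ⬝ᵥ z = 0 := hQ.mulVec_dotProduct_one_sub_mulVec x x
    have : x = y + z := by simp [y, z, sub_mulVec]
    conv_lhs => rw [this]
    simp only [add_dotProduct, dotProduct_add, dotProduct_comm z y, hyz]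
    ring
  set u := (P * (1 - Q)) *ᵥ z
  set w := ((1 - P) * Q) *ᵥ y
  have horth : u ⬝ᵥ w = 0 := by
    simp only [u, w, ← mulVec_mulVec]
    exact hP.mulVec_dotProduct_one_sub_mulVec _ _
  calc ((P - Q) *ᵥ x) ⬝ᵥ ((P - Q) *ᵥ x) = u ⬝ᵥ u + w ⬝ᵥ w := by
        rw [hsplit]
        simp only [sub_dotProduct, dotProduct_sub, dotProduct_comm w u, horth]
        ring
    _ ≤ c ^ 2 * (z ⬝ᵥ z) + c ^ 2 * (y ⬝ᵥ y) :=
        add_le_add (hbound _ z hu) (hbound _ y (le_max_right _ _))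
    _ = c ^ 2 * (x ⬝ᵥ x) := by rw [hx]; ring

theorem sub_mul_l2_opNorm_sub_le_of_isStarProjection [DecidableEq n] {P Q C C' : Matrix n n ℝ}
    (hP : IsStarProjection P) (hQ : IsStarProjection Q) {γ : ℝ}
    (hPQ : γ * ‖(1 - P) * Q‖ ≤ ‖(1 - P) * (C' - C) * Q‖)
    (hQP : γ * ‖(1 - Q) * P‖ ≤ ‖(1 - Q) * (C - C') * P‖) :
    (γ - ‖C - C'‖) * ‖P - Q‖ ≤ ‖(1 - P) * (C - C') * P‖ := by
  set E := C - C'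
  set r := ‖(1 - P) * E * P‖
  have hPQ' : ‖(1 - P) * (C' - C) * Q‖ ≤ r + ‖E‖ * ‖P - Q‖ := by
    have : (1 - P) * (C' - C) * Q = -((1 - P) * E * P + (1 - P) * E * (Q - P)) := by
      simp only [E]; noncomm_ring
    rw [this, norm_neg]
    refine (norm_add_le _ _).trans (add_le_add_right ?_ _)
    calc ‖(1 - P) * E * (Q - P)‖ ≤ ‖1 - P‖ * ‖E‖ * ‖Q - P‖ := norm_mul₃_le
      _ ≤ 1 * ‖E‖ * ‖P - Q‖ := by
        rw [norm_sub_rev Q]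
        gcongr
        exact IsStarProjection.norm_le _ hP.one_sub
      _ = ‖E‖ * ‖P - Q‖ := by ring
  have hQP' : ‖(1 - Q) * E * P‖ ≤ r + ‖E‖ * ‖P - Q‖ := by
    have : (1 - Q) * E * P = (1 - P) * E * P + (P - Q) * E * P := by noncomm_ring
    rw [this]
    refine (norm_add_le _ _).trans (add_le_add_right ?_ _)
    calc ‖(P - Q) * E * P‖ ≤ ‖P - Q‖ * ‖E‖ * ‖P‖ := norm_mul₃_le
      _ ≤ ‖P - Q‖ * ‖E‖ * 1 := by gcongr; exact IsStarProjection.norm_le _ hP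
      _ = ‖E‖ * ‖P - Q‖ := by ring
  have hmax := l2_opNorm_sub_le_max_of_isStarProjection hP hQ
  rcases le_or_gt γ 0 with hγ | hγ
  · nlinarith [norm_nonneg E, norm_nonneg (P - Q), norm_nonneg ((1 - P) * E * P)]
  · have : γ * ‖P - Q‖ ≤ r + ‖E‖ * ‖P - Q‖ := by
      refine (mul_le_mul_of_nonneg_left hmax hγ.le).trans ?_
      rw [mul_max_of_nonneg _ _ hγ.le]
      exact max_le (hQP.trans hQP') (hPQ.trans hPQ')
    linarith

lemma transpose_mul_submatrix_self [DecidableEq ι] [DecidableEq k] {W : Matrix ι ι ℝ}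
    (hW : Wᵀ * W = 1) {f : k → ι} (hf : Function.Injective f) :
    (W.submatrix id f)ᵀ * W.submatrix id f = 1 := by
  rw [transpose_submatrix, ← submatrix_mul _ _ _ _ _ Function.bijective_id, hW,
    submatrix_one _ hf]

lemma mul_submatrix_of_eigendecomp [DecidableEq ι] [Fintype k] [DecidableEq k]
    {C W : Matrix ι ι ℝ} {lam : ι → ℝ} (hW : Wᵀ * W = 1) (hC : C = W * diagonal lam * Wᵀ)
    (f : k → ι) : C * W.submatrix id f = W.submatrix id f * diagonal (lam ∘ f) := by
  have hCW : C * W = W * diagonal lam := by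
    rw [hC, Matrix.mul_assoc, hW, Matrix.mul_one]
  have hsub : C * W.submatrix id f = (C * W).submatrix id f := by ext; simp [mul_apply]
  have hdiag : (W * diagonal lam).submatrix id f = W.submatrix id f * diagonal (lam ∘ f) := by
    ext; simp [mul_diagonal]
  rw [hsub, hCW, hdiag]

def colProj [Fintype k] (W : Matrix ι ι ℝ) (f : k → ι) : Matrix ι ι ℝ :=
  W.submatrix id f * (W.submatrix id f)ᵀ

lemma isStarProjection_colProj [DecidableEq ι] [Fintype k] [DecidableEq k] {W : Matrix ι ι ℝ}
    (hW : Wᵀ * W = 1) {f : k → ι} (hf : Function.Injective f) :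
    IsStarProjection (colProj W f) where
  isIdempotentElem := by
    rw [IsIdempotentElem, colProj, Matrix.mul_assoc, ← Matrix.mul_assoc _ (W.submatrix id f),
      transpose_mul_submatrix_self hW hf, Matrix.one_mul]
  isSelfAdjoint := by
    rw [IsSelfAdjoint, star_eq_conjTranspose, conjTranspose_eq_transpose_of_trivial, colProj,
      transpose_mul, transpose_transpose]

lemma one_sub_colProj_inl [DecidableEq ι] [Fintype k] [Fintype l] {W : Matrix ι ι ℝ}
    (hW : W * Wᵀ = 1) (e : k ⊕ l ≃ ι) :
    1 - colProj W (e ∘ Sum.inl) = colProj W (e ∘ Sum.inr) := by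
  have hcols : W.submatrix id e =
      fromCols (W.submatrix id (e ∘ Sum.inl)) (W.submatrix id (e ∘ Sum.inr)) := by
    ext i (j | j) <;> rfl
  have h := submatrix_mul_equiv W Wᵀ id e id
  rw [hW, submatrix_id_id, ← transpose_submatrix, hcols, transpose_fromCols,
    fromCols_mul_fromRows] at h
  rw [← h, colProj, colProj, add_sub_cancel_left]

lemma l2_opNorm_colProj_mul_mul_colProj [DecidableEq ι] [Fintype k] [DecidableEq k] [Fintype l]
    [DecidableEq l] {W W' : Matrix ι ι ℝ} (hW : Wᵀ * W = 1) (hW' : W'ᵀ * W' = 1) {f : k → ι}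
    {g : l → ι} (hf : Function.Injective f) (hg : Function.Injective g) (M : Matrix ι ι ℝ) :
    ‖colProj W f * M * colProj W' g‖ = ‖(W.submatrix id f)ᵀ * M * W'.submatrix id g‖ := by
  have : colProj W f * M * colProj W' g =
      W.submatrix id f * ((W.submatrix id f)ᵀ * M * W'.submatrix id g) *
        (W'.submatrix id g)ᵀ := by
    simp only [colProj, Matrix.mul_assoc]
  rw [this, l2_opNorm_mul_transpose_of_transpose_mul_self_eq_one
    (transpose_mul_submatrix_self hW' hg), l2_opNorm_mul_of_transpose_mul_self_eq_one
    (transpose_mul_submatrix_self hW hf)]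

theorem mul_l2_opNorm_le_of_eigendecomp [DecidableEq ι] [Fintype k] [DecidableEq k] [Fintype l]
    [DecidableEq l] {C C' W W' : Matrix ι ι ℝ} {lam lam' : ι → ℝ} (hW : Wᵀ * W = 1)
    (hW' : W'ᵀ * W' = 1) (hC : C = W * diagonal lam * Wᵀ) (hC' : C' = W' * diagonal lam' * W'ᵀ)
    (e : k ⊕ l ≃ ι) {s γ : ℝ} (hgap' : ∀ j, s + γ ≤ lam' (e (Sum.inl j)))
    (hgap : ∀ i, lam (e (Sum.inr i)) ≤ s) :
    γ * ‖(1 - colProj W (e ∘ Sum.inl)) * colProj W' (e ∘ Sum.inl)‖ ≤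
      ‖(1 - colProj W (e ∘ Sum.inl)) * (C' - C) * colProj W' (e ∘ Sum.inl)‖ := by
  have hinl : Function.Injective (e ∘ Sum.inl) := e.injective.comp Sum.inl_injective
  have hinr : Function.Injective (e ∘ Sum.inr) := e.injective.comp Sum.inr_injective
  set B := W.submatrix id (e ∘ Sum.inr)
  set A' := W'.submatrix id (e ∘ Sum.inl)
  have hX := l2_opNorm_colProj_mul_mul_colProj hW hW' hinr hinl 1
  rw [Matrix.mul_one, Matrix.mul_one] at hX
  rw [one_sub_colProj_inl (mul_eq_one_comm.mp hW), hX,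
    l2_opNorm_colProj_mul_mul_colProj hW hW' hinr hinl]
  have hCt : Cᵀ = C := by rw [hC]; simp [transpose_mul, Matrix.mul_assoc]
  have hBC : Bᵀ * C = diagonal (lam ∘ e ∘ Sum.inr) * Bᵀ := by
    rw [← hCt, ← transpose_mul, mul_submatrix_of_eigendecomp hW hC, transpose_mul,
      diagonal_transpose]
  have hsylvester : Bᵀ * (C' - C) * A' =
      Bᵀ * A' * diagonal (lam' ∘ e ∘ Sum.inl) - diagonal (lam ∘ e ∘ Sum.inr) * (Bᵀ * A') := by
    rw [Matrix.mul_sub, Matrix.sub_mul, Matrix.mul_assoc, mul_submatrix_of_eigendecomp hW' hC',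
      hBC, Matrix.mul_assoc, Matrix.mul_assoc]
  rw [hsylvester]
  exact mul_l2_opNorm_le_l2_opNorm_mul_diagonal_sub_diagonal_mul _ hgap' hgap

theorem sub_mul_l2_opNorm_colProj_sub_le_of_eigendecomp [DecidableEq ι] [Fintype k]
    [DecidableEq k] [Fintype l] [DecidableEq l] {C C' W W' : Matrix ι ι ℝ} {lam lam' : ι → ℝ}
    (hW : Wᵀ * W = 1) (hW' : W'ᵀ * W' = 1) (hC : C = W * diagonal lam * Wᵀ)
    (hC' : C' = W' * diagonal lam' * W'ᵀ) (e : k ⊕ l ≃ ι) {a b : ℝ}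
    (htop : ∀ j, a ≤ lam (e (Sum.inl j))) (htop' : ∀ j, a - ‖C - C'‖ ≤ lam' (e (Sum.inl j)))
    (hbot : ∀ i, lam (e (Sum.inr i)) ≤ b) (hbot' : ∀ i, lam' (e (Sum.inr i)) ≤ b + ‖C - C'‖) :
    (a - b - 2 * ‖C - C'‖) * ‖colProj W (e ∘ Sum.inl) - colProj W' (e ∘ Sum.inl)‖ ≤
      ‖(1 - colProj W (e ∘ Sum.inl)) * (C - C') * colProj W (e ∘ Sum.inl)‖ := by
  have hinl : Function.Injective (e ∘ Sum.inl) := e.injective.comp Sum.inl_injective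
  have hCC' := mul_l2_opNorm_le_of_eigendecomp hW hW' hC hC' e (s := b)
    (γ := a - b - ‖C - C'‖) (fun j => by linarith [htop' j]) hbot
  have hC'C := mul_l2_opNorm_le_of_eigendecomp hW' hW hC' hC e (s := b + ‖C - C'‖)
    (γ := a - b - ‖C - C'‖) (fun j => by linarith [htop j]) hbot'
  have h := sub_mul_l2_opNorm_sub_le_of_isStarProjection (isStarProjection_colProj hW hinl)
    (isStarProjection_colProj hW' hinl) hCC' hC'C
  linarith

end Matrix

/-- Eigenspace perturbation bound (Golub & Van Loan, Corollary 8.1.11). If `C`,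
`Ĉ` are symmetric with orthogonal eigendecompositions `C = W diag(λ) Wᵀ`, `Ĉ = Ŵ diag(λ̂) Ŵᵀ`
with eigenvalues in decreasing order, `A`, `Â` are the first `n` columns of `W`, `Ŵ`, `B` the
last `m − n` columns of `W`, the spectral gap `δ = λ_n − λ_{n+1} > 0`, and `‖C − Ĉ‖₂ ≤ δ/5`,
then `‖AAᵀ − ÂÂᵀ‖₂ ≤ (4/δ) ‖Bᵀ (C − Ĉ) A‖₂`. -/
theorem eigenspace_perturbation_bound (m n : ℕ) (hnm : n < m)
    (C Chat W What : Matrix (Fin m) (Fin m) ℝ)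
    (lam lamhat : Fin m → ℝ) (hlam : Antitone lam) (hlamhat : Antitone lamhat)
    (hW : Wᵀ * W = 1) (hWhat : Whatᵀ * What = 1)
    (hCdec : C = W * Matrix.diagonal lam * Wᵀ)
    (hChatdec : Chat = What * Matrix.diagonal lamhat * Whatᵀ)
    (A Ahat : Matrix (Fin m) (Fin n) ℝ) (B : Matrix (Fin m) (Fin (m - n)) ℝ)
    (hA : A = fun i j => W i (Fin.castLE hnm.le j))
    (hAhat : Ahat = fun i j => What i (Fin.castLE hnm.le j))
    (hB : B = fun i j => W i (Fin.cast (Nat.add_sub_cancel' hnm.le) (Fin.natAdd n j)))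
    (δ : ℝ) (hδdef : δ = lam ⟨n - 1, by omega⟩ - lam ⟨n, hnm⟩) (hδ : 0 < δ)
    (hpert : ‖C - Chat‖ ≤ δ / 5) :
    ‖A * Aᵀ - Ahat * Ahatᵀ‖ ≤ (4 / δ) * ‖Bᵀ * (C - Chat) * A‖ := by
  subst hA hAhat hB
  set e : Fin n ⊕ Fin (m - n) ≃ Fin m :=
    finSumFinEquiv.trans (finCongr (Nat.add_sub_cancel' hnm.le))
  set P := colProj W (e ∘ Sum.inl)
  change ‖P - colProj What (e ∘ Sum.inl)‖ ≤
    4 / δ * ‖(W.submatrix id (e ∘ Sum.inr))ᵀ * (C - Chat) * W.submatrix id (e ∘ Sum.inl)‖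
  rw [← l2_opNorm_colProj_mul_mul_colProj hW hW (e.injective.comp Sum.inr_injective)
    (e.injective.comp Sum.inl_injective), ← one_sub_colProj_inl (mul_eq_one_comm.mp hW)]
  set k₁ : Fin m := ⟨n - 1, by omega⟩
  set k₂ : Fin m := ⟨n, hnm⟩
  have he₁ : ∀ j, e (Sum.inl j) ≤ k₁ := fun j => by simp [e, k₁, Fin.le_def]; omega
  have he₂ : ∀ i, k₂ ≤ e (Sum.inr i) := fun i => by simp [e, k₂, Fin.le_def]
  have hweyl₁ := eigenvalue_sub_l2_opNorm_sub_le hlam hlamhat hW hWhat hCdec hChatdec k₁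
  have hweyl₂ := eigenvalue_sub_l2_opNorm_sub_le hlamhat hlam hWhat hW hChatdec hCdec k₂
  rw [norm_sub_rev] at hweyl₂
  have key := sub_mul_l2_opNorm_colProj_sub_le_of_eigendecomp hW hWhat hCdec hChatdec e
    (a := lam k₁) (b := lam k₂) (fun j => hlam (he₁ j))
    (fun j => by linarith [hlamhat (he₁ j)]) (fun i => hlam (he₂ i))
    (fun i => by linarith [hlamhat (he₂ i)])
  have hd := norm_nonneg (P - colProj What (e ∘ Sum.inl))
  rw [div_mul_eq_mul_div, le_div_iff₀ hδ]
  nlinarith [mul_le_mul_of_nonneg_right hpert hd, mul_nonneg hδ.le hd]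
end
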